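/- For every positive integer n and all subsets O, C of [n] = {1,…,n}, the pair (O,C) satisfies |O| = |C| and |O ∩ [k]| ≥ |C ∩ [k+1]| for all k ∈ {0,1,…,n−1} if and only if there exists a set partition 𝓑 of [n] with op(𝓑) = O and cl(𝓑) = C. -/

import Mathlib

open scoped Classical
noncomputable section

/-! ### Set partitions of type A -/

/-- A set partition of `[n] = {1,…,n}`: pairwise disjoint nonempty blocks covering `[n]`. -/
structure SetPartitionA (n : ℕ) where
  blocks : Finset (Finset ℕ)
  nonempty : ∀ B ∈ blocks, B.Nonempty
  disj : ∀ B ∈ blocks, ∀ B' ∈ blocks, B ≠ B' → Disjoint B B'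
  cover : ∀ i : ℕ, (∃ B ∈ blocks, i ∈ B) ↔ i ∈ Finset.Icc 1 n

/-- Two arcs `(i,j)`, `(i',j')` cross if `i<i'<j<j'` (in either order of the two arcs). -/
def ACross (a b : ℕ × ℕ) : Prop :=
  (a.1 < b.1 ∧ b.1 < a.2 ∧ a.2 < b.2) ∨ (b.1 < a.1 ∧ a.1 < b.2 ∧ b.2 < a.2)

/-- Two arcs `(i,j)`, `(i',j')` nest if `i<i'<j'<j` (in either order of the two arcs). -/
def ANest (a b : ℕ × ℕ) : Prop :=
  (a.1 < b.1 ∧ b.1 < b.2 ∧ b.2 < a.2) ∨ (b.1 < a.1 ∧ a.1 < a.2 ∧ a.2 < b.2)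

namespace SetPartitionA

variable {n : ℕ}

/-- Openers: elements of `[n]` that are not the maximum of their block. -/
def openers (P : SetPartitionA n) : Finset ℕ :=
  (Finset.Icc 1 n).filter fun i => ∃ B ∈ P.blocks, i ∈ B ∧ ∃ j ∈ B, i < j

/-- Closers: elements of `[n]` that are not the minimum of their block. -/
def closers (P : SetPartitionA n) : Finset ℕ :=
  (Finset.Icc 1 n).filter fun i => ∃ B ∈ P.blocks, i ∈ B ∧ ∃ j ∈ B, j < i

/-- `(i,j)` is an arc: `i < j` are in the same block with no block element in between. -/
def IsArc (P : SetPartitionA n) (i j : ℕ) : Prop :=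
  i < j ∧ ∃ B ∈ P.blocks, i ∈ B ∧ j ∈ B ∧ ∀ k ∈ B, ¬(i < k ∧ k < j)

/-- The finite set of arcs of `P`. -/
def arcs (P : SetPartitionA n) : Finset (ℕ × ℕ) :=
  ((Finset.Icc 1 n) ×ˢ (Finset.Icc 1 n)).filter fun p => P.IsArc p.1 p.2

/-- The number of crossings: pairs of arcs `(i,j)`, `(i',j')` with `i<i'<j<j'`. -/
def crossings (P : SetPartitionA n) : ℕ :=
  ((P.arcs ×ˢ P.arcs).filter fun q =>
    q.1.1 < q.2.1 ∧ q.2.1 < q.1.2 ∧ q.1.2 < q.2.2).card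

/-- The number of nestings: pairs of arcs `(i,j)`, `(i',j')` with `i<i'<j'<j`. -/
def nestings (P : SetPartitionA n) : ℕ :=
  ((P.arcs ×ˢ P.arcs).filter fun q =>
    q.1.1 < q.2.1 ∧ q.2.1 < q.2.2 ∧ q.2.2 < q.1.2).card

/-- The cardinality of a maximal crossing: largest set of mutually crossing arcs. -/
def maxCrossing (P : SetPartitionA n) : ℕ :=
  (P.arcs.powerset.filter fun S => ∀ a ∈ S, ∀ b ∈ S, a ≠ b → ACross a b).sup Finset.card

/-- The cardinality of a maximal nesting: largest set of mutually nesting arcs. -/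
def maxNesting (P : SetPartitionA n) : ℕ :=
  (P.arcs.powerset.filter fun S => ∀ a ∈ S, ∀ b ∈ S, a ≠ b → ANest a b).sup Finset.card

end SetPartitionA

/-! ### Set partitions of classical types B/C/D on `[±n]` -/

/-- Position of `i ∈ [±n]` in the type `C` nesting order `1<⋯<n<-n<⋯<-1`. -/
def nestOrd (n : ℕ) (i : ℤ) : ℤ := if 0 < i then i else 2 * n + 1 + i

/-- Position of `i ∈ [±n]` in the crossing order `1<⋯<n<-1<⋯<-n`. -/
def crossOrd (n : ℕ) (i : ℤ) : ℤ := if 0 < i then i else (n : ℤ) - i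

/-- Position of `i ∈ [±n] ∪ {0}` in the type `B` nesting order `1<⋯<n<0<-n<⋯<-1`. -/
def nestOrdB (n : ℕ) (i : ℤ) : ℤ :=
  if 0 < i then i else if i = 0 then (n : ℤ) + 1 else 2 * n + 2 + i

/-- The negative `-B` of a block. -/
def negSet (B : Finset ℤ) : Finset ℤ := B.image fun x => -x

/-- A set partition of type `B_n`/`C_n`: a set partition of `[±n]` with `B ∈ 𝓑 ↔ -B ∈ 𝓑`
and at most one block `B₀` with `B₀ = -B₀`. -/
structure SetPartitionC (n : ℕ) where
  blocks : Finset (Finset ℤ)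
  nonempty : ∀ B ∈ blocks, B.Nonempty
  disj : ∀ B ∈ blocks, ∀ B' ∈ blocks, B ≠ B' → Disjoint B B'
  cover : ∀ i : ℤ, (∃ B ∈ blocks, i ∈ B) ↔ (i ≠ 0 ∧ |i| ≤ (n : ℤ))
  symm : ∀ B ∈ blocks, negSet B ∈ blocks
  zeroBlock : ∀ B ∈ blocks, ∀ B' ∈ blocks, negSet B = B → negSet B' = B' → B = B'

/-- Endpoints of an arc, ordered by the crossing order. -/
def cpr (n : ℕ) (p : ℤ × ℤ) : ℤ × ℤ :=
  (min (crossOrd n p.1) (crossOrd n p.2), max (crossOrd n p.1) (crossOrd n p.2))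

/-- `p` crosses `q` with `p` coming first in the crossing order. -/
def CrossRel (n : ℕ) (p q : ℤ × ℤ) : Prop :=
  (cpr n p).1 < (cpr n q).1 ∧ (cpr n q).1 < (cpr n p).2 ∧ (cpr n p).2 < (cpr n q).2

/-- The two arcs `p`, `q` cross in the crossing diagram. -/
def Crosses (n : ℕ) (p q : ℤ × ℤ) : Prop := CrossRel n p q ∨ CrossRel n q p

/-- `p` nests over `q` in the nesting diagram (arcs written in nesting order). -/
def NestRel (n : ℕ) (p q : ℤ × ℤ) : Prop :=
  nestOrd n p.1 < nestOrd n q.1 ∧ nestOrd n q.2 < nestOrd n p.2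

/-- The two arcs `p`, `q` nest in the nesting diagram. -/
def Nests (n : ℕ) (p q : ℤ × ℤ) : Prop := NestRel n p q ∨ NestRel n q p

/-- `p` nests over `q` in the type `B` nesting diagram. -/
def NestRelB (n : ℕ) (p q : ℤ × ℤ) : Prop :=
  nestOrdB n p.1 < nestOrdB n q.1 ∧ nestOrdB n q.2 < nestOrdB n p.2

/-- The two arcs `p`, `q` nest in the type `B` nesting diagram. -/
def NestsB (n : ℕ) (p q : ℤ × ℤ) : Prop := NestRelB n p q ∨ NestRelB n q p

/-- Exceptional pairs for type `B` crossings: both arcs have positive opener and negative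
closer, and at least one closer is smaller in absolute value than its opener. -/
def ExcCross (p q : ℤ × ℤ) : Prop :=
  0 < p.1 ∧ p.2 < 0 ∧ 0 < q.1 ∧ q.2 < 0 ∧ (|p.2| < |p.1| ∨ |q.2| < |q.1|)

/-- Exceptional pairs for type `B` nestings: both arcs have positive opener (or begin at `0`)
and negative closer (or end at `0`), and at least one closer is smaller in absolute value
than its opener. -/
def ExcNest (p q : ℤ × ℤ) : Prop :=
  0 ≤ p.1 ∧ p.2 ≤ 0 ∧ 0 ≤ q.1 ∧ q.2 ≤ 0 ∧ (|p.2| < |p.1| ∨ |q.2| < |q.1|)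

/-- A block augmented by `0` if it is the zero block. -/
def augB (B : Finset ℤ) : Finset ℤ := if negSet B = B then insert 0 B else B

/-- The arc `p` contains `n`. -/
def ContainsN (n : ℕ) (p : ℤ × ℤ) : Prop := p.1 = (n : ℤ) ∨ p.2 = (n : ℤ)

/-- The arc `p` contains `-n`. -/
def ContainsNegN (n : ℕ) (p : ℤ × ℤ) : Prop := p.1 = -(n : ℤ) ∨ p.2 = -(n : ℤ)

namespace SetPartitionC

variable {n : ℕ}

/-- The ground set `[±n]` as a finset of integers. -/
def pmn (n : ℕ) : Finset ℤ := (Finset.Icc (-(n : ℤ)) (n : ℤ)).erase 0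

/-- `(i,j)` is an arc: `i`, `j` are consecutive elements of a block in the nesting order. -/
def IsArc (P : SetPartitionC n) (i j : ℤ) : Prop :=
  nestOrd n i < nestOrd n j ∧ ∃ B ∈ P.blocks, i ∈ B ∧ j ∈ B ∧
    ∀ k ∈ B, ¬(nestOrd n i < nestOrd n k ∧ nestOrd n k < nestOrd n j)

/-- The finite set of arcs of `P` (written in nesting order). -/
def arcs (P : SetPartitionC n) : Finset (ℤ × ℤ) :=
  (pmn n ×ˢ pmn n).filter fun p => P.IsArc p.1 p.2

/-- Openers: positive elements that are not maximal in their block w.r.t. the nesting order. -/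
def openers (P : SetPartitionC n) : Finset ℤ :=
  (Finset.Icc 1 (n : ℤ)).filter fun i =>
    ∃ B ∈ P.blocks, i ∈ B ∧ ∃ j ∈ B, nestOrd n i < nestOrd n j

/-- Closers: positive elements that are not minimal in their block w.r.t. the nesting order. -/
def closers (P : SetPartitionC n) : Finset ℤ :=
  (Finset.Icc 1 (n : ℤ)).filter fun i =>
    ∃ B ∈ P.blocks, i ∈ B ∧ ∃ j ∈ B, nestOrd n j < nestOrd n i

/-- The number of crossings of a type `C` set partition. -/
def crossings (P : SetPartitionC n) : ℕ :=
  ((P.arcs ×ˢ P.arcs).filter fun q => CrossRel n q.1 q.2).card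

/-- The number of nestings of a type `C` set partition. -/
def nestings (P : SetPartitionC n) : ℕ :=
  ((P.arcs ×ˢ P.arcs).filter fun q => NestRel n q.1 q.2).card

/-- The number of crossings among pairs of arcs that both have positive opener. -/
def crossingsPos (P : SetPartitionC n) : ℕ :=
  (((P.arcs.filter fun p => 0 < p.1) ×ˢ (P.arcs.filter fun p => 0 < p.1)).filter
    fun q => CrossRel n q.1 q.2).card

/-- The number of nestings among pairs of arcs that both have positive opener. -/
def nestingsPos (P : SetPartitionC n) : ℕ :=
  (((P.arcs.filter fun p => 0 < p.1) ×ˢ (P.arcs.filter fun p => 0 < p.1)).filter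
    fun q => NestRel n q.1 q.2).card

/-- The cardinality of a maximal crossing. -/
def maxCrossing (P : SetPartitionC n) : ℕ :=
  (P.arcs.powerset.filter fun S => ∀ a ∈ S, ∀ b ∈ S, a ≠ b → Crosses n a b).sup Finset.card

/-- The cardinality of a maximal nesting. -/
def maxNesting (P : SetPartitionC n) : ℕ :=
  (P.arcs.powerset.filter fun S => ∀ a ∈ S, ∀ b ∈ S, a ≠ b → Nests n a b).sup Finset.card

/-! ### Type B notions -/

/-- `(i,j)` is a type `B` nesting arc: consecutive elements of an augmented block in the
type `B` nesting order. -/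
def IsArcB (P : SetPartitionC n) (i j : ℤ) : Prop :=
  nestOrdB n i < nestOrdB n j ∧ ∃ B ∈ P.blocks, i ∈ augB B ∧ j ∈ augB B ∧
    ∀ k ∈ augB B, ¬(nestOrdB n i < nestOrdB n k ∧ nestOrdB n k < nestOrdB n j)

/-- The finite set of type `B` nesting arcs of `P`. -/
def arcsB (P : SetPartitionC n) : Finset (ℤ × ℤ) :=
  ((insert 0 (pmn n)) ×ˢ (insert 0 (pmn n))).filter fun p => P.IsArcB p.1 p.2

/-- The number of type `B` crossings. -/
def crossingsB (P : SetPartitionC n) : ℕ :=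
  ((P.arcs ×ˢ P.arcs).filter fun q => CrossRel n q.1 q.2 ∧ ¬ExcCross q.1 q.2).card

/-- The number of type `B` nestings. -/
def nestingsB (P : SetPartitionC n) : ℕ :=
  ((P.arcsB ×ˢ P.arcsB).filter fun q => NestRelB n q.1 q.2 ∧ ¬ExcNest q.1 q.2).card

/-- Openers in type `B`: positive elements not maximal in their block
w.r.t. the type `B` nesting order. -/
def openersB (P : SetPartitionC n) : Finset ℤ :=
  (Finset.Icc 1 (n : ℤ)).filter fun i =>
    ∃ B ∈ P.blocks, i ∈ B ∧ ∃ j ∈ B, nestOrdB n i < nestOrdB n j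

/-- Closers in type `B`: positive elements not minimal in their block
w.r.t. the type `B` nesting order. -/
def closersB (P : SetPartitionC n) : Finset ℤ :=
  (Finset.Icc 1 (n : ℤ)).filter fun i =>
    ∃ B ∈ P.blocks, i ∈ B ∧ ∃ j ∈ B, nestOrdB n j < nestOrdB n i

/-- The cardinality of a maximal type `B` crossing. -/
def maxCrossingB (P : SetPartitionC n) : ℕ :=
  (P.arcs.powerset.filter fun S =>
    ∀ a ∈ S, ∀ b ∈ S, a ≠ b → Crosses n a b ∧ ¬ExcCross a b).sup Finset.card

/-- The cardinality of a maximal type `B` nesting. -/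
def maxNestingB (P : SetPartitionC n) : ℕ :=
  (P.arcsB.powerset.filter fun S =>
    ∀ a ∈ S, ∀ b ∈ S, a ≠ b → NestsB n a b ∧ ¬ExcNest a b).sup Finset.card

/-! ### Type D notions -/

/-- A type `C` set partition is of type `D` if the zero block, when present, is not a single
pair `{i,-i}`. -/
def IsTypeD (P : SetPartitionC n) : Prop :=
  ∀ B ∈ P.blocks, negSet B = B → B.card ≠ 2

/-- The arcs starting in `{1,…,n-1}` and ending in the negative of an element of `{1,…,n-1}`. -/
def pnArcs (P : SetPartitionC n) : Finset (ℤ × ℤ) :=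
  P.arcs.filter fun p => 0 < p.1 ∧ p.1 < (n : ℤ) ∧ -(n : ℤ) < p.2 ∧ p.2 < 0

/-- The index `l` of an arc `a = (i_l, -j_l)` in the list of `pnArcs` ordered by openers. -/
def dRank (P : SetPartitionC n) (a : ℤ × ℤ) : ℕ :=
  (P.pnArcs.filter fun b => b.1 ≤ a.1).card

/-- The crossings allowed in a non-crossing set partition of type `D`. -/
def AllowedCrossD (P : SetPartitionC n) (p q : ℤ × ℤ) : Prop :=
  (ContainsN n p ∧ q ∈ P.pnArcs ∧ P.pnArcs.card < 2 * P.dRank q) ∨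
  (ContainsN n q ∧ p ∈ P.pnArcs ∧ P.pnArcs.card < 2 * P.dRank p) ∨
  (ContainsNegN n p ∧ q ∈ P.pnArcs ∧ 2 * P.dRank q ≤ P.pnArcs.card) ∨
  (ContainsNegN n q ∧ p ∈ P.pnArcs ∧ 2 * P.dRank p ≤ P.pnArcs.card) ∨
  (ContainsN n p ∧ ContainsNegN n q) ∨
  (ContainsN n q ∧ ContainsNegN n p)

/-- `P` is a non-crossing set partition of type `D_n`. -/
def NonCrossingD (P : SetPartitionC n) : Prop :=
  (∀ i : ℤ, 0 < i → P.IsArc i (-i) → i = n) ∧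
  (∀ p ∈ P.arcs, ∀ q ∈ P.arcs, Crosses n p q → P.AllowedCrossD p q) ∧
  (∀ p ∈ P.arcs, ContainsN n p →
    ∀ q ∈ P.pnArcs, P.pnArcs.card < 2 * P.dRank q → Crosses n p q) ∧
  (∀ p ∈ P.arcs, ContainsNegN n p →
    ∀ q ∈ P.pnArcs, 2 * P.dRank q ≤ P.pnArcs.card → Crosses n p q)

/-- The nestings (`p` over `q`) allowed in a non-nesting set partition of type `D`. -/
def AllowedNestD (P : SetPartitionC n) (p q : ℤ × ℤ) : Prop :=
  (0 < p.1 ∧ p.1 < q.1 ∧ q.1 < (n : ℤ) ∧ p.2 = -(n : ℤ) ∧ q.2 = (n : ℤ)) ∨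
  (q.1 = (n : ℤ) ∧ q.2 = -(n : ℤ) ∧ 0 < p.1 ∧ p.1 < (n : ℤ) ∧ -(n : ℤ) < p.2 ∧ p.2 < 0 ∧
    ∃ m : ℤ, 0 < m ∧ m < p.1 ∧ m < -p.2 ∧ P.IsArc m (n : ℤ))

/-- `P` is a non-nesting set partition of type `D_n`. -/
def NonNestingD (P : SetPartitionC n) : Prop :=
  (∀ i : ℤ, 0 < i → P.IsArc i (-i) → i = n) ∧
  (∀ p ∈ P.arcs, ∀ q ∈ P.arcs, NestRel n p q → P.AllowedNestD p q)

end SetPartitionC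

/-! ### The staircase polyomino and chains in fillings -/

/-- The cells of the staircase polyomino `P_n`: `(c,r)` with `1 ≤ c ≤ n`, `c ≤ r ≤ 2n-1`. -/
def cellsP (n : ℕ) : Finset (ℕ × ℕ) :=
  ((Finset.Icc 1 n) ×ˢ (Finset.Icc 1 (2 * n - 1))).filter fun p => p.1 ≤ p.2

/-- The length of the longest north-east chain among a set of (nonzero) cells:
columns strictly increase while rows strictly decrease. -/
def neLen (S : Finset (ℕ × ℕ)) : ℕ :=
  (S.powerset.filter fun T =>
    ∀ a ∈ T, ∀ b ∈ T, a ≠ b →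
      (a.1 < b.1 ∧ b.2 < a.2) ∨ (b.1 < a.1 ∧ a.2 < b.2)).sup Finset.card

/-- The length of the longest south-east chain among a set of (nonzero) cells:
columns and rows strictly increase, and the surrounding rectangle lies in the polyomino
(`a.1 ≤ b.2` for all cells `a`, `b` of the chain). -/
def seLen (S : Finset (ℕ × ℕ)) : ℕ :=
  (S.powerset.filter fun T =>
    (∀ a ∈ T, ∀ b ∈ T, a ≠ b →
      (a.1 < b.1 ∧ a.2 < b.2) ∨ (b.1 < a.1 ∧ b.2 < a.2)) ∧
    ∀ a ∈ T, ∀ b ∈ T, a.1 ≤ b.2).sup Finset.card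

namespace SetPartitionC

variable {n : ℕ}

/-- The cells filled with `1` in the nesting filling of the staircase polyomino: rows are
labelled from top to bottom by `2,…,n,-n,…,-1`; the cell in column `i` and row labelled `j`
is filled iff `(i,j)` is an arc with positive opener `i`. -/
def nestFill (P : SetPartitionC n) : Finset (ℕ × ℕ) :=
  (cellsP n).filter fun c => ∃ j : ℤ, P.IsArc (c.1 : ℤ) j ∧ nestOrd n j = (c.2 : ℤ) + 1

/-- The cells filled with `1` in the crossing filling of the staircase polyomino: rows are
labelled from top to bottom by `2,…,n,-1,…,-n`; the cell in column `i` and row labelled `j`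
is filled iff `(i,j)` is an arc with positive opener `i`. -/
def crossFill (P : SetPartitionC n) : Finset (ℕ × ℕ) :=
  (cellsP n).filter fun c => ∃ j : ℤ, P.IsArc (c.1 : ℤ) j ∧ crossOrd n j = (c.2 : ℤ) + 1

end SetPartitionC

/-! ### Triangulations of the symmetric 2n-gon and symmetric fans of Dyck paths -/

/-- `p` is a diagonal of the `2n`-gon with vertices labelled by `[±n]`, written with its two
(distinct) endpoints in crossing order. -/
def IsDiag (n : ℕ) (p : ℤ × ℤ) : Prop :=
  p.1 ≠ 0 ∧ p.2 ≠ 0 ∧ |p.1| ≤ (n : ℤ) ∧ |p.2| ≤ (n : ℤ) ∧ crossOrd n p.1 < crossOrd n p.2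

/-- Normalize a pair so that its endpoints are in crossing order. -/
def normD (n : ℕ) (p : ℤ × ℤ) : ℤ × ℤ :=
  if crossOrd n p.1 < crossOrd n p.2 then p else (p.2, p.1)

/-- `ω` contains `m` mutually crossing diagonals. -/
def HasMCross (n m : ℕ) (ω : Finset (ℤ × ℤ)) : Prop :=
  ∃ S ⊆ ω, S.card = m ∧ ∀ a ∈ S, ∀ b ∈ S, a ≠ b → Crosses n a b

/-- A type `C_n` `k`-triangulation: a symmetric set of diagonals with no `(k+1)`-crossing,
maximal with this property. -/
def IsTriangC (n k : ℕ) (ω : Finset (ℤ × ℤ)) : Prop :=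
  (∀ p ∈ ω, IsDiag n p) ∧
  (∀ p ∈ ω, normD n (-p.1, -p.2) ∈ ω) ∧
  ¬HasMCross n (k + 1) ω ∧
  ∀ d : ℤ × ℤ, IsDiag n d → d ∉ ω → HasMCross n (k + 1) (insert d ω)

/-- A Dyck path in the staircase polyomino starting at the top cell `(i,i)` of column `i`,
proceeding by unit south or west steps inside `P_n`, and ending on the main diagonal
`r = 2n - c`. -/
def IsDyckPath (n i : ℕ) (l : List (ℕ × ℕ)) : Prop :=
  l ≠ [] ∧ l.head? = some (i, i) ∧ (∀ c ∈ l, c ∈ cellsP n) ∧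
  l.Chain' (fun a b => (b.1 = a.1 ∧ b.2 = a.2 + 1) ∨ (b.1 + 1 = a.1 ∧ b.2 = a.2)) ∧
  ∀ c : ℕ × ℕ, l.getLast? = some c → c.2 = 2 * n - c.1

/-- A symmetric fan of `k` non-intersecting Dyck paths: the `i`-th path starts at cell
`(i,i)` and the paths are pairwise cell-disjoint. -/
def IsSymFan (n k : ℕ) (f : Fin k → List (ℕ × ℕ)) : Prop :=
  (∀ i : Fin k, IsDyckPath n ((i : ℕ) + 1) (f i)) ∧
  ∀ i j : Fin k, i ≠ j → ∀ c ∈ f i, c ∉ f j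


/-!
The arcs of a partition (pairs of consecutive elements of a block) match its openers
bijectively with its closers, each opener lying to the left of its closer; this gives both
conditions. Conversely, by induction on `n`: the conditions force `n` not to be an opener. If
`n` is a closer, the largest opener `o` is removed from `O` and `n` from `C`, the smaller
pair still satisfies the conditions, and `n` is attached to the block of the resulting
partition ending in `o`; otherwise `n` becomes a singleton block.
-/

open Finset

theorem subset_Icc_of_subset_Icc_add_one {n : ℕ} {s : Finset ℕ} (hs : s ⊆ Icc 1 (n + 1))
    (hn : n + 1 ∉ s) : s ⊆ Icc 1 n := by
  intro x hx
  have hx' := mem_Icc.1 (hs hx)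
  have : x ≠ n + 1 := fun h => hn (h ▸ hx)
  exact mem_Icc.2 ⟨hx'.1, by omega⟩

def OpenersDominate (n : ℕ) (O C : Finset ℕ) : Prop :=
  ∀ k < n, #(C ∩ Icc 1 (k + 1)) ≤ #(O ∩ Icc 1 k)

namespace OpenersDominate

variable {n : ℕ} {O C : Finset ℕ}

theorem of_succ (h : OpenersDominate (n + 1) O C) : OpenersDominate n O C :=
  fun k hk => h k (Nat.lt_succ_of_lt hk)

theorem subset_Icc (h : OpenersDominate (n + 1) O C) (hC : C ⊆ Icc 1 (n + 1))
    (hcard : #O = #C) : O ⊆ Icc 1 n := by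
  have hn := h n n.lt_succ_self
  rw [inter_eq_left.2 hC, ← hcard] at hn
  exact inter_eq_left.1 (eq_of_subset_of_card_le inter_subset_left hn)

theorem erase_max (h : OpenersDominate (n + 1) O C) (hO : O ⊆ Icc 1 n) (hne : O.Nonempty)
    (hcard : #O = #C) (hnC : n + 1 ∈ C) :
    OpenersDominate n (O.erase (O.max' hne)) (C.erase (n + 1)) := by
  intro k hk
  have hCk : C.erase (n + 1) ∩ Icc 1 (k + 1) = C ∩ Icc 1 (k + 1) := by
    rw [erase_inter, erase_eq_of_notMem]
    simp only [mem_inter, mem_Icc, not_and, not_le]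
    omega
  rcases le_or_gt (O.max' hne) k with hle | hlt
  · have hOk : O.erase (O.max' hne) ∩ Icc 1 k = O.erase (O.max' hne) := by
      refine inter_eq_left.2 fun x hx => ?_
      have hxO := mem_of_mem_erase hx
      exact mem_Icc.2 ⟨(mem_Icc.1 (hO hxO)).1, (le_max' O x hxO).trans hle⟩
    calc #(C.erase (n + 1) ∩ Icc 1 (k + 1))
        ≤ #(C.erase (n + 1)) := card_le_card inter_subset_left
      _ = #(O.erase (O.max' hne) ∩ Icc 1 k) := by
        rw [hOk, card_erase_of_mem hnC, card_erase_of_mem (max'_mem O hne), hcard]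
  · have hOk : O.erase (O.max' hne) ∩ Icc 1 k = O ∩ Icc 1 k := by
      rw [erase_inter, erase_eq_of_notMem]
      simp only [mem_inter, mem_Icc, not_and, not_le]
      omega
    rw [hCk, hOk]
    exact h k (Nat.lt_succ_of_lt hk)

end OpenersDominate

namespace SetPartitionA

variable {n : ℕ} (P : SetPartitionA n) {B B' S : Finset ℕ} {i i' j j' o : ℕ}

theorem openers_subset : P.openers ⊆ Icc 1 n := filter_subset _ _

theorem subset_Icc (hB : B ∈ P.blocks) : B ⊆ Icc 1 n :=
  fun i hi => (P.cover i).1 ⟨B, hB, hi⟩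

theorem eq_of_mem_of_mem (hB : B ∈ P.blocks) (hB' : B' ∈ P.blocks) (hi : i ∈ B)
    (hi' : i ∈ B') : B = B' := by
  by_contra hne
  exact disjoint_left.1 (P.disj B hB B' hB' hne) hi hi'

theorem mem_openers : i ∈ P.openers ↔ ∃ B ∈ P.blocks, i ∈ B ∧ ∃ j ∈ B, i < j := by
  simp only [openers, mem_filter, and_iff_right_iff_imp]
  rintro ⟨B, hB, hi, -⟩
  exact P.subset_Icc hB hi

theorem mem_closers : j ∈ P.closers ↔ ∃ B ∈ P.blocks, j ∈ B ∧ ∃ i ∈ B, i < j := by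
  simp only [closers, mem_filter, and_iff_right_iff_imp]
  rintro ⟨B, hB, hj, -⟩
  exact P.subset_Icc hB hj

theorem erase_subset_openers (hB : B ∈ P.blocks) (ho : o ∈ B) (ho' : o ∉ P.openers) :
    B.erase o ⊆ P.openers := by
  intro i hi
  obtain ⟨hio, hi⟩ := mem_erase.1 hi
  rcases hio.lt_or_gt with hlt | hgt
  · exact P.mem_openers.2 ⟨B, hB, hi, o, ho, hlt⟩
  · exact absurd (P.mem_openers.2 ⟨B, hB, ho, i, hi, hgt⟩) ho'

variable {P}

theorem IsArc.fst_mem_openers (h : P.IsArc i j) : i ∈ P.openers :=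
  let ⟨hij, B, hB, hi, hj, _⟩ := h
  P.mem_openers.2 ⟨B, hB, hi, j, hj, hij⟩

theorem IsArc.snd_mem_closers (h : P.IsArc i j) : j ∈ P.closers :=
  let ⟨hij, B, hB, hi, hj, _⟩ := h
  P.mem_closers.2 ⟨B, hB, hj, i, hi, hij⟩

theorem IsArc.right_unique (h : P.IsArc i j) (h' : P.IsArc i j') : j = j' := by
  obtain ⟨hij, B, hB, hi, hj, hgap⟩ := h
  obtain ⟨hij', B', hB', hi', hj', hgap'⟩ := h'
  obtain rfl := P.eq_of_mem_of_mem hB hB' hi hi'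
  rcases lt_trichotomy j j' with hlt | heq | hgt
  · exact absurd ⟨hij, hlt⟩ (hgap' j hj)
  · exact heq
  · exact absurd ⟨hij', hgt⟩ (hgap j' hj')

theorem IsArc.left_unique (h : P.IsArc i j) (h' : P.IsArc i' j) : i = i' := by
  obtain ⟨hij, B, hB, hi, hj, hgap⟩ := h
  obtain ⟨hij', B', hB', hi', hj', hgap'⟩ := h'
  obtain rfl := P.eq_of_mem_of_mem hB hB' hj hj'
  rcases lt_trichotomy i i' with hlt | heq | hgt
  · exact absurd ⟨hlt, hij'⟩ (hgap i' hi')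
  · exact heq
  · exact absurd ⟨hgt, hij⟩ (hgap' i hi)

theorem exists_isArc_of_mem_openers (h : i ∈ P.openers) : ∃ j, P.IsArc i j := by
  obtain ⟨B, hB, hi, j, hj, hij⟩ := P.mem_openers.1 h
  have hne : (B.filter (i < ·)).Nonempty := ⟨j, mem_filter.2 ⟨hj, hij⟩⟩
  obtain ⟨hmin, hlt⟩ := mem_filter.1 ((B.filter (i < ·)).min'_mem hne)
  refine ⟨_, hlt, B, hB, hi, hmin, fun k hk ⟨hik, hkj⟩ => ?_⟩
  exact (min'_le _ k (mem_filter.2 ⟨hk, hik⟩)).not_gt hkj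

theorem exists_isArc_of_mem_closers (h : j ∈ P.closers) : ∃ i, P.IsArc i j := by
  obtain ⟨B, hB, hj, i, hi, hij⟩ := P.mem_closers.1 h
  have hne : (B.filter (· < j)).Nonempty := ⟨i, mem_filter.2 ⟨hi, hij⟩⟩
  obtain ⟨hmax, hlt⟩ := mem_filter.1 ((B.filter (· < j)).max'_mem hne)
  refine ⟨_, hlt, B, hB, hmax, hj, fun k hk ⟨hik, hkj⟩ => ?_⟩
  exact (le_max' _ k (mem_filter.2 ⟨hk, hkj⟩)).not_gt hik

theorem mem_arcs {p : ℕ × ℕ} : p ∈ P.arcs ↔ P.IsArc p.1 p.2 := by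
  simp only [arcs, mem_filter, mem_product, and_iff_right_iff_imp]
  rintro ⟨-, B, hB, hi, hj, -⟩
  exact ⟨P.subset_Icc hB hi, P.subset_Icc hB hj⟩

variable (P)

theorem card_arcs_eq_card_openers : #P.arcs = #P.openers :=
  card_nbij Prod.fst (fun _ hp => (mem_arcs.1 hp).fst_mem_openers)
    (fun p hp q hq (h : p.1 = q.1) =>
      Prod.ext h ((mem_arcs.1 hp).right_unique (h ▸ mem_arcs.1 hq)))
    (fun i hi => let ⟨j, hj⟩ := exists_isArc_of_mem_openers hi; ⟨(i, j), mem_arcs.2 hj, rfl⟩)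

theorem card_arcs_eq_card_closers : #P.arcs = #P.closers :=
  card_nbij Prod.snd (fun _ hp => (mem_arcs.1 hp).snd_mem_closers)
    (fun p hp q hq (h : p.2 = q.2) =>
      Prod.ext ((mem_arcs.1 hp).left_unique (h ▸ mem_arcs.1 hq)) h)
    (fun j hj => let ⟨i, hi⟩ := exists_isArc_of_mem_closers hj; ⟨(i, j), mem_arcs.2 hi, rfl⟩)

theorem card_openers_eq_card_closers : #P.openers = #P.closers :=
  P.card_arcs_eq_card_openers.symm.trans P.card_arcs_eq_card_closers

theorem openersDominate : OpenersDominate n P.openers P.closers := fun k _ =>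
  calc #(P.closers ∩ Icc 1 (k + 1))
      ≤ #(P.arcs.filter (·.2 ≤ k + 1)) := by
        refine card_le_card_of_surjOn Prod.snd fun j hj => ?_
        obtain ⟨hj, hjk⟩ := mem_inter.1 hj
        obtain ⟨i, hi⟩ := exists_isArc_of_mem_closers hj
        exact ⟨(i, j), mem_filter.2 ⟨mem_arcs.2 hi, (mem_Icc.1 hjk).2⟩, rfl⟩
    _ ≤ #(P.openers ∩ Icc 1 k) := by
        refine card_le_card_of_injOn Prod.fst (fun p hp => ?_) fun p hp q hq h => ?_
        · obtain ⟨hp, hpk⟩ := mem_filter.1 hp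
          obtain hp := mem_arcs.1 hp
          have hi := mem_Icc.1 (P.openers_subset hp.fst_mem_openers)
          exact mem_inter.2 ⟨hp.fst_mem_openers, mem_Icc.2 ⟨hi.1, Nat.le_of_lt_succ (hp.1.trans_le hpk)⟩⟩
        · have hp := mem_arcs.1 (mem_filter.1 hp).1
          have hq := mem_arcs.1 (mem_filter.1 hq).1
          exact Prod.ext h (hp.right_unique ((congrArg (P.IsArc · q.2) h).mpr hq))

theorem subset_Icc_of_eq_empty_or_mem (hS : S = ∅ ∨ S ∈ P.blocks) : S ⊆ Icc 1 n := by
  rcases hS with rfl | hS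
  exacts [empty_subset _, P.subset_Icc hS]

theorem disjoint_insert_succ (hS : S = ∅ ∨ S ∈ P.blocks) (hB : B ∈ P.blocks) (hBS : B ≠ S) :
    Disjoint (insert (n + 1) S) B := by
  refine disjoint_insert_left.2 ⟨fun h => ?_, ?_⟩
  · have := mem_Icc.1 (P.subset_Icc hB h)
    omega
  · rcases hS with rfl | hS
    exacts [disjoint_empty_left _, P.disj S hS B hB hBS.symm]

/-- With `S = ∅` this adds the singleton block `{n + 1}`. -/
def extend (S : Finset ℕ) (hS : S = ∅ ∨ S ∈ P.blocks) : SetPartitionA (n + 1) where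
  blocks := insert (insert (n + 1) S) (P.blocks.erase S)
  nonempty := by
    simp only [forall_mem_insert, mem_erase]
    exact ⟨insert_nonempty _ _, fun B ⟨_, hB⟩ => P.nonempty B hB⟩
  disj := by
    intro B hB B' hB' hne
    simp only [mem_insert, mem_erase] at hB hB'
    rcases hB with rfl | ⟨hBS, hB⟩ <;> rcases hB' with rfl | ⟨hB'S, hB'⟩
    · exact absurd rfl hne
    · exact P.disjoint_insert_succ hS hB' hB'S
    · exact (P.disjoint_insert_succ hS hB hBS).symm
    · exact P.disj B hB B' hB' hne
  cover := by
    intro i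
    simp only [exists_mem_insert]
    simp only [mem_erase, mem_insert, mem_Icc]
    constructor
    · rintro ((rfl | hi) | ⟨B, ⟨-, hB⟩, hi⟩)
      · omega
      · have := mem_Icc.1 (P.subset_Icc_of_eq_empty_or_mem hS hi)
        omega
      · have := mem_Icc.1 (P.subset_Icc hB hi)
        omega
    · intro hi
      rcases eq_or_ne i (n + 1) with rfl | hin
      · exact Or.inl (Or.inl rfl)
      obtain ⟨B, hB, hiB⟩ := (P.cover i).2 (mem_Icc.2 (by omega))
      rcases eq_or_ne B S with rfl | hBS
      exacts [Or.inl (Or.inr hiB), Or.inr ⟨B, ⟨hBS, hB⟩, hiB⟩]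

theorem openers_extend (hS : S = ∅ ∨ S ∈ P.blocks) :
    (P.extend S hS).openers = P.openers ∪ S := by
  have hSn : ∀ j ∈ S, j < n + 1 := fun j hj =>
    Nat.lt_succ_of_le (mem_Icc.1 (P.subset_Icc_of_eq_empty_or_mem hS hj)).2
  ext i
  simp only [mem_union, mem_openers, extend, exists_mem_insert]
  simp only [mem_erase, mem_insert]
  constructor
  · rintro (⟨rfl | hi, hlt | ⟨j, hj, hij⟩⟩ | ⟨B, ⟨-, hB⟩, hi, j, hj, hij⟩)
    · exact absurd hlt (lt_irrefl _)
    · exact absurd (hSn j hj) hij.not_gt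
    · exact Or.inr hi
    · exact Or.inr hi
    · exact Or.inl ⟨B, hB, hi, j, hj, hij⟩
  · rintro (⟨B, hB, hi, j, hj, hij⟩ | hi)
    · rcases eq_or_ne B S with rfl | hBS
      · exact Or.inl ⟨Or.inr hi, Or.inr ⟨j, hj, hij⟩⟩
      · exact Or.inr ⟨B, ⟨hBS, hB⟩, hi, j, hj, hij⟩
    · exact Or.inl ⟨Or.inr hi, Or.inl (hSn i hi)⟩

theorem mem_closers_extend (hS : S = ∅ ∨ S ∈ P.blocks) :
    i ∈ (P.extend S hS).closers ↔ i ∈ P.closers ∨ (i = n + 1 ∧ S.Nonempty) := by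
  have hSn : ∀ j ∈ S, j < n + 1 := fun j hj =>
    Nat.lt_succ_of_le (mem_Icc.1 (P.subset_Icc_of_eq_empty_or_mem hS hj)).2
  simp only [mem_closers, extend, exists_mem_insert]
  simp only [mem_erase, mem_insert]
  constructor
  · rintro (⟨rfl | hi, hlt | ⟨j, hj, hij⟩⟩ | ⟨B, ⟨-, hB⟩, hi, j, hj, hij⟩)
    · exact absurd hlt (lt_irrefl _)
    · exact Or.inr ⟨rfl, j, hj⟩
    · exact absurd (hSn i hi) hlt.not_gt
    · rcases hS with rfl | hS
      · exact absurd hi (notMem_empty i)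
      · exact Or.inl ⟨S, hS, hi, j, hj, hij⟩
    · exact Or.inl ⟨B, hB, hi, j, hj, hij⟩
  · rintro (⟨B, hB, hi, j, hj, hij⟩ | ⟨rfl, j, hj⟩)
    · rcases eq_or_ne B S with rfl | hBS
      · exact Or.inl ⟨Or.inr hi, Or.inr ⟨j, hj, hij⟩⟩
      · exact Or.inr ⟨B, ⟨hBS, hB⟩, hi, j, hj, hij⟩
    · exact Or.inl ⟨Or.inl rfl, Or.inr ⟨j, hj, hSn j hj⟩⟩

theorem exists_of_openersDominate {n : ℕ} {O C : Finset ℕ}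
    (hO : O ⊆ Icc 1 n) (hC : C ⊆ Icc 1 n) (hcard : #O = #C) (h : OpenersDominate n O C) :
    ∃ P : SetPartitionA n, P.openers = O ∧ P.closers = C := by
  induction n generalizing O C with
  | zero =>
    obtain rfl : O = ∅ := subset_empty.1 (by simpa using hO)
    obtain rfl : C = ∅ := subset_empty.1 (by simpa using hC)
    exact ⟨⟨∅, by simp, by simp, by simp⟩, by simp [openers], by simp [closers]⟩
  | succ n ih =>
    have hOn : O ⊆ Icc 1 n := h.subset_Icc hC hcard
    by_cases hnC : n + 1 ∈ C
    · have hne : O.Nonempty := card_pos.1 (hcard ▸ card_pos.2 ⟨_, hnC⟩)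
      have ho : O.max' hne ∈ O := max'_mem O hne
      obtain ⟨P, hPO, hPC⟩ := ih ((erase_subset _ _).trans hOn)
        (subset_Icc_of_subset_Icc_add_one ((erase_subset _ _).trans hC) (notMem_erase _ _))
        (by rw [card_erase_of_mem ho, card_erase_of_mem hnC, hcard])
        (h.erase_max hOn hne hcard hnC)
      obtain ⟨B, hB, hoB⟩ := (P.cover _).2 (hOn ho)
      have hBO : B.erase (O.max' hne) ⊆ O.erase (O.max' hne) := by
        rw [← hPO]
        exact P.erase_subset_openers hB hoB (hPO ▸ notMem_erase _ _)
      refine ⟨P.extend B (Or.inr hB), ?_, ?_⟩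
      · rw [P.openers_extend, hPO, ← insert_erase hoB, union_insert, union_eq_left.2 hBO,
          insert_erase ho]
      · ext x
        rw [P.mem_closers_extend, hPC, mem_erase]
        by_cases hx : x = n + 1
        · simp [hx, hnC, show B.Nonempty from ⟨_, hoB⟩]
        · simp [hx]
    · obtain ⟨P, hPO, hPC⟩ := ih hOn (subset_Icc_of_subset_Icc_add_one hC hnC) hcard h.of_succ
      refine ⟨P.extend ∅ (Or.inl rfl), by rw [P.openers_extend, hPO, union_empty], ?_⟩
      ext x
      simp [P.mem_closers_extend, hPC]

end SetPartitionA

theorem stmt0_general (n : ℕ) (O C : Finset ℕ)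
    (hO : O ⊆ Finset.Icc 1 n) (hC : C ⊆ Finset.Icc 1 n) :
    (O.card = C.card ∧
      ∀ k : ℕ, k < n → (C ∩ Finset.Icc 1 (k + 1)).card ≤ (O ∩ Finset.Icc 1 k).card) ↔
    ∃ P : SetPartitionA n, P.openers = O ∧ P.closers = C := by
  constructor
  · rintro ⟨hcard, h⟩
    exact SetPartitionA.exists_of_openersDominate hO hC hcard h
  · rintro ⟨P, rfl, rfl⟩
    exact ⟨P.card_openers_eq_card_closers, P.openersDominate⟩

theorem stmt0 (n : ℕ) (hn : 0 < n) (O C : Finset ℕ)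
    (hO : O ⊆ Finset.Icc 1 n) (hC : C ⊆ Finset.Icc 1 n) :
    (O.card = C.card ∧
      ∀ k : ℕ, k < n → (C ∩ Finset.Icc 1 (k + 1)).card ≤ (O ∩ Finset.Icc 1 k).card) ↔
    ∃ P : SetPartitionA n, P.openers = O ∧ P.closers = C :=
  stmt0_general n O C hO hC
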